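/- arXiv:1510.04396 — 2 statements merged into one kernel-verified Lean document; each statement's English description precedes it below -/
import Mathlib

section
/- The converse of the distance-based affinity theorem fails in general: there exist two distinct lines L_1, L_2 in ℝ^3, a nonzero homogeneous polynomial p vanishing on L_1 ∪ L_2, and points x ∈ L_1, x' ∈ L_2 with ∇p(x), ∇p(x') ≠ 0, such that ⟨∇p(x), x'⟩ = 0 and ⟨∇p(x'), x⟩ = 0 (so the affinity equals 1 even though the points lie in different subspaces). -/
open RealInnerProductSpace InnerProductSpace

/-!
Take the coordinate lines `ℝ e₀` and `ℝ e₁`, which lie in the plane `x₂ = 0`, and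
`p = x₂ (x₀ + x₁)`. For a product `p = ℓ m` of linear forms, `∇p(x) = ℓ(x) m♯ + m(x) ℓ♯`,
so at every point of the plane `ℓ = 0` the gradient is a multiple of the normal `ℓ♯` and
hence orthogonal to every other point of the plane, whichever line that point lies on.
-/

section ProductOfLinearForms

variable {E : Type*} [NormedAddCommGroup E] [InnerProductSpace ℝ E] [CompleteSpace E]
  (ℓ m : E →L[ℝ] ℝ) {x : E}

theorem hasGradientAt_clm_mul_clm (x : E) :
    HasGradientAt (fun y => ℓ y * m y)
      (ℓ x • (toDual ℝ E).symm m + m x • (toDual ℝ E).symm ℓ) x := by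
  rw [hasGradientAt_iff_hasFDerivAt]
  refine (ℓ.hasFDerivAt.mul m.hasFDerivAt).congr_fderiv ?_
  simp only [map_add, map_smul, LinearIsometryEquiv.apply_symm_apply]

theorem gradient_clm_mul_clm_of_eq_zero (hx : ℓ x = 0) :
    gradient (fun y => ℓ y * m y) x = m x • (toDual ℝ E).symm ℓ := by
  rw [(hasGradientAt_clm_mul_clm ℓ m x).gradient, hx, zero_smul, zero_add]

theorem gradient_clm_mul_clm_ne_zero (hℓ : ℓ ≠ 0) (hx : ℓ x = 0) (hm : m x ≠ 0) :
    gradient (fun y => ℓ y * m y) x ≠ 0 := by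
  rw [gradient_clm_mul_clm_of_eq_zero ℓ m hx]
  exact smul_ne_zero hm (by simpa using hℓ)

theorem inner_gradient_clm_mul_clm_eq_zero {x' : E} (hx : ℓ x = 0) (hx' : ℓ x' = 0) :
    ⟪gradient (fun y => ℓ y * m y) x, x'⟫ = 0 := by
  rw [gradient_clm_mul_clm_of_eq_zero ℓ m hx, real_inner_smul_left, toDual_symm_apply, hx',
    mul_zero]

end ProductOfLinearForms

theorem EuclideanSpace.apply_eq_zero_of_mem_span_single {n : ℕ} {i j : Fin n} (hji : j ≠ i)
    {x : EuclideanSpace ℝ (Fin n)} (hx : x ∈ Submodule.span ℝ {EuclideanSpace.single i 1}) :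
    x j = 0 := by
  obtain ⟨c, rfl⟩ := Submodule.mem_span_singleton.mp hx
  simp [hji]

theorem EuclideanSpace.span_single_ne_span_single {n : ℕ} {i j : Fin n} (hij : i ≠ j) :
    Submodule.span ℝ {EuclideanSpace.single i (1 : ℝ)} ≠
      Submodule.span ℝ {EuclideanSpace.single j 1} := fun h => by
  have hi : EuclideanSpace.single i (1 : ℝ) ∈ Submodule.span ℝ {EuclideanSpace.single j 1} :=
    h ▸ Submodule.mem_span_singleton_self _
  simpa using apply_eq_zero_of_mem_span_single hij hi

theorem distance_based_affinity_converse_fails :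
    ∃ (L₁ L₂ : Submodule ℝ (EuclideanSpace ℝ (Fin 3))),
      Module.finrank ℝ L₁ = 1 ∧ Module.finrank ℝ L₂ = 1 ∧ L₁ ≠ L₂ ∧
      ∃ p : MvPolynomial (Fin 3) ℝ, p ≠ 0 ∧ p.IsHomogeneous 2 ∧
        (∀ x : EuclideanSpace ℝ (Fin 3), (x ∈ L₁ ∨ x ∈ L₂) →
          MvPolynomial.eval (fun k => x k) p = 0) ∧
        ∃ x ∈ L₁, ∃ x' ∈ L₂,
          gradient (fun y : EuclideanSpace ℝ (Fin 3) =>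
            MvPolynomial.eval (fun k => y k) p) x ≠ 0 ∧
          gradient (fun y : EuclideanSpace ℝ (Fin 3) =>
            MvPolynomial.eval (fun k => y k) p) x' ≠ 0 ∧
          ⟪gradient (fun y : EuclideanSpace ℝ (Fin 3) =>
            MvPolynomial.eval (fun k => y k) p) x, x'⟫ = 0 ∧
          ⟪gradient (fun y : EuclideanSpace ℝ (Fin 3) =>
            MvPolynomial.eval (fun k => y k) p) x', x⟫ = 0 := by
  set e : Fin 3 → EuclideanSpace ℝ (Fin 3) := fun i => EuclideanSpace.single i 1
  set ℓ : EuclideanSpace ℝ (Fin 3) →L[ℝ] ℝ := EuclideanSpace.proj 2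
  set m : EuclideanSpace ℝ (Fin 3) →L[ℝ] ℝ := EuclideanSpace.proj 0 + EuclideanSpace.proj 1
  set p : MvPolynomial (Fin 3) ℝ := .X 2 * (.X 0 + .X 1)
  have hp : (fun y : EuclideanSpace ℝ (Fin 3) => MvPolynomial.eval (fun k => y k) p) =
      fun y => ℓ y * m y := by
    funext y; simp [p, ℓ, m]
  have hplane {i : Fin 3} (hi : i ≠ 2) {x} (hx : x ∈ Submodule.span ℝ {e i}) : ℓ x = 0 :=
    EuclideanSpace.apply_eq_zero_of_mem_span_single hi.symm hx
  have hℓ : ℓ ≠ 0 := fun h => by simpa [ℓ, e] using congrArg (· (e 2)) h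
  have he (i : Fin 3) : e i ≠ 0 := by simp [e]
  have hmem (i : Fin 3) : e i ∈ Submodule.span ℝ {e i} := Submodule.mem_span_singleton_self _
  have hℓe₀ : ℓ (e 0) = 0 := hplane (by decide) (hmem 0)
  have hℓe₁ : ℓ (e 1) = 0 := hplane (by decide) (hmem 1)
  refine ⟨_, _, finrank_span_singleton (he 0), finrank_span_singleton (he 1),
    EuclideanSpace.span_single_ne_span_single (by decide), p, ?_, ?_, ?_,
    e 0, hmem 0, e 1, hmem 1, ?_⟩
  · exact fun h => by simpa [p] using congrArg (MvPolynomial.eval fun _ => (1 : ℝ)) h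
  · exact (MvPolynomial.isHomogeneous_X ℝ 2).mul
      ((MvPolynomial.isHomogeneous_X ℝ 0).add (MvPolynomial.isHomogeneous_X ℝ 1))
  · rintro x (hx | hx) <;> simp [congrFun hp x, hplane (by decide) hx]
  · rw [hp]
    exact ⟨gradient_clm_mul_clm_ne_zero ℓ m hℓ hℓe₀ (by simp [m, e]),
      gradient_clm_mul_clm_ne_zero ℓ m hℓ hℓe₁ (by simp [m, e]),
      inner_gradient_clm_mul_clm_eq_zero ℓ m hℓe₀ hℓe₁,
      inner_gradient_clm_mul_clm_eq_zero ℓ m hℓe₁ hℓe₀⟩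
end

section
/- Let A = S_1 ∪ ⋯ ∪ S_n be a union of distinct hyperplanes in ℝ^D with unit normals b_1, …, b_n, let p(x) = ∏ ⟨b_i, x⟩, and let x_j, x_{j'} be points each lying on exactly one hyperplane. Then the angle-based affinity C_{jj'} = |⟨∇p(x_j)/‖∇p(x_j)‖, ∇p(x_{j'})/‖∇p(x_{j'})‖⟩| equals 1 if x_j and x_{j'} lie on the same hyperplane, and equals |⟨b_i, b_{i'}⟩| < 1 if they lie on distinct hyperplanes H_i ≠ H_{i'}. -/
/-! On the hyperplane `⟪b i, x⟫ = 0` every term of the product rule for `∏ k, ⟪b k, x⟫` except the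
one differentiating the `i`-th factor still contains that factor, so `∇p(x)` is a multiple of `b i`,
nonzero when `x` lies on no other hyperplane. Normalizing removes the scalars up to sign, leaving
`|⟪b i, b i'⟫|`, which is `1` for `i = i'` and `< 1` by Cauchy–Schwarz for non-parallel normals. -/

open RealInnerProductSpace Finset

variable {E : Type*} [NormedAddCommGroup E] [InnerProductSpace ℝ E]

theorem hasGradientAt_prod_inner_of_inner_eq_zero [CompleteSpace E] {ι : Type*} [Fintype ι]
    [DecidableEq ι] (b : ι → E) {x : E} {i : ι} (hx : ⟪b i, x⟫ = 0) :
    HasGradientAt (fun y => ∏ k, ⟪b k, y⟫) ((∏ k ∈ univ.erase i, ⟪b k, x⟫) • b i) x := by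
  rw [hasGradientAt_iff_hasFDerivAt]
  refine (HasFDerivAt.finsetProd (u := univ) (g' := fun k => innerSL ℝ (b k))
    fun k _ => (innerSL ℝ (b k)).hasFDerivAt).congr_fderiv ?_
  rw [sum_eq_single i]
  · ext y
    simp [mul_comm]
  · intro k _ hki
    rw [prod_eq_zero (mem_erase.mpr ⟨Ne.symm hki, mem_univ i⟩) hx, zero_smul]
  · simp

theorem exists_ne_zero_gradient_prod_inner_eq_smul [CompleteSpace E] {ι : Type*} [Fintype ι]
    (b : ι → E) {x : E} {i : ι} (hx : ⟪b i, x⟫ = 0) (hxo : ∀ k ≠ i, ⟪b k, x⟫ ≠ 0) :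
    ∃ c : ℝ, c ≠ 0 ∧ gradient (fun y => ∏ k, ⟪b k, y⟫) x = c • b i := by
  classical
  exact ⟨∏ k ∈ univ.erase i, ⟪b k, x⟫, prod_ne_zero_iff.mpr fun k hk => hxo k (mem_erase.mp hk).1,
    (hasGradientAt_prod_inner_of_inner_eq_zero b hx).gradient⟩

theorem abs_inner_inv_norm_smul_smul {c c' : ℝ} (hc : c ≠ 0) (hc' : c' ≠ 0) (x y : E) :
    |⟪‖c • x‖⁻¹ • (c • x), ‖c' • y‖⁻¹ • (c' • y)⟫| = |⟪‖x‖⁻¹ • x, ‖y‖⁻¹ • y⟫| := by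
  simp only [norm_smul, real_inner_smul_left, real_inner_smul_right, abs_mul, abs_inv,
    Real.norm_eq_abs, abs_abs, mul_inv]
  field_simp

theorem abs_real_inner_lt_one_of_forall_ne_smul {u v : E} (hu : ‖u‖ = 1) (hv : ‖v‖ = 1)
    (h : ∀ r : ℝ, v ≠ r • u) : |⟪u, v⟫| < 1 := by
  refine lt_of_le_of_ne (by simpa [hu, hv] using abs_real_inner_le_norm u v) fun heq => ?_
  obtain ⟨-, r, -, hr⟩ :=
    (abs_real_inner_div_norm_mul_norm_eq_one_iff u v).mp (by simpa [hu, hv] using heq)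
  exact h r hr

theorem angle_based_affinity_for_hyperplanes
    (D n : ℕ) (b : Fin n → EuclideanSpace ℝ (Fin D)) (hb : ∀ i, ‖b i‖ = 1)
    (hpar : ∀ i k : Fin n, i ≠ k → ∀ c : ℝ, b i ≠ c • b k)
    (xj xj' : EuclideanSpace ℝ (Fin D)) (i i' : Fin n)
    (hxj : ⟪b i, xj⟫ = 0) (hxjo : ∀ k, k ≠ i → ⟪b k, xj⟫ ≠ 0)
    (hxj' : ⟪b i', xj'⟫ = 0) (hxj'o : ∀ k, k ≠ i' → ⟪b k, xj'⟫ ≠ 0)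
    (gj gj' : EuclideanSpace ℝ (Fin D))
    (hgj : gj = gradient (fun y : EuclideanSpace ℝ (Fin D) => ∏ k, ⟪b k, y⟫) xj)
    (hgj' : gj' = gradient (fun y : EuclideanSpace ℝ (Fin D) => ∏ k, ⟪b k, y⟫) xj') :
    (i = i' → |⟪(‖gj‖)⁻¹ • gj, (‖gj'‖)⁻¹ • gj'⟫| = 1) ∧
    (i ≠ i' → |⟪(‖gj‖)⁻¹ • gj, (‖gj'‖)⁻¹ • gj'⟫| = |⟪b i, b i'⟫| ∧
      |⟪b i, b i'⟫| < 1) := by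
  obtain ⟨c, hc, rfl⟩ : ∃ c : ℝ, c ≠ 0 ∧ gj = c • b i :=
    hgj ▸ exists_ne_zero_gradient_prod_inner_eq_smul b hxj hxjo
  obtain ⟨c', hc', rfl⟩ : ∃ c' : ℝ, c' ≠ 0 ∧ gj' = c' • b i' :=
    hgj' ▸ exists_ne_zero_gradient_prod_inner_eq_smul b hxj' hxj'o
  have affinity_eq : |⟪‖c • b i‖⁻¹ • (c • b i), ‖c' • b i'‖⁻¹ • (c' • b i')⟫| = |⟪b i, b i'⟫| := by
    rw [abs_inner_inv_norm_smul_smul hc hc', hb i, hb i', inv_one, one_smul, one_smul]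
  refine ⟨fun h => ?_, fun h => ⟨affinity_eq,
    abs_real_inner_lt_one_of_forall_ne_smul (hb i) (hb i') (hpar i' i (Ne.symm h))⟩⟩
  subst h
  rw [affinity_eq, real_inner_self_eq_norm_sq, hb i, one_pow, abs_one]
end
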